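/- Let W be an SW-deterministic Wang tile set and T = T(W) the associated automaton with semigroup S(T). If S(T) is infinite, then W admits a valid tiling of the square [0,ℓ] × [0,ℓ] for every ℓ ∈ ℕ (hence admits a ℤ²-tiling). -/

import Mathlib

/-- A Wang tile over a set of colors `C`. -/
structure WangTile (C : Type*) where
  west : C
  south : C
  east : C
  north : C
deriving DecidableEq

variable {C : Type*}

/-- `f` is a valid tiling of the discrete plane `ℤ²` by the tile set `W`. -/
def IsZTiling (W : Finset (WangTile C)) (f : ℤ × ℤ → WangTile C) : Prop :=
  ∀ x y : ℤ, f (x, y) ∈ W ∧ (f (x, y)).east = (f (x + 1, y)).west ∧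
    (f (x, y)).north = (f (x, y + 1)).south

/-- `g` is a valid tiling of the first quadrant `ℕ²` by the tile set `W`. -/
def IsNTiling (W : Finset (WangTile C)) (g : ℕ × ℕ → WangTile C) : Prop :=
  ∀ x y : ℕ, g (x, y) ∈ W ∧ (g (x, y)).east = (g (x + 1, y)).west ∧
    (g (x, y)).north = (g (x, y + 1)).south

/-- A `ℤ²`-tiling is periodic if it has a nonzero periodicity vector. -/
def PeriodicTiling (f : ℤ × ℤ → WangTile C) : Prop :=
  ∃ v : ℤ × ℤ, v ≠ 0 ∧ ∀ t : ℤ × ℤ, f (t + v) = f t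

/-- An `ℕ²`-tiling is y-recurrent if two distinct rows have the same horizontal word
(sequence of south colors). -/
def YRecurrent (g : ℕ × ℕ → WangTile C) : Prop :=
  ∃ i j : ℕ, i ≠ j ∧ ∀ x : ℕ, (g (x, i)).south = (g (x, j)).south

variable {Q A : Type*}

/-- The (partial) state reached after reading the first `n` letters of `ξ` from state `q`
in the deterministic partial automaton `δ`. -/
def pstate (δ : Q → A → Option (A × Q)) (ξ : ℕ → A) (q : Q) : ℕ → Option Q
  | 0 => some q
  | n + 1 => (pstate δ ξ q n).bind fun s => (δ s (ξ n)).map Prod.snd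

/-- The (partial) output letter at position `n` when reading `ξ` from state `q`. -/
def pout (δ : Q → A → Option (A × Q)) (ξ : ℕ → A) (q : Q) (n : ℕ) : Option A :=
  (pstate δ ξ q n).bind fun s => (δ s (ξ n)).map Prod.fst

open Classical in
/-- The partial action of a state `q` on an infinite word `ξ`. -/
noncomputable def pact (δ : Q → A → Option (A × Q)) (q : Q) (ξ : ℕ → A) : Option (ℕ → A) :=
  if h : ∀ n, (pout δ ξ q n).isSome then some fun n => (pout δ ξ q n).get (h n) else none

/-- The partial action of a state sequence `q_n … q_1` (rightmost acting first). -/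
noncomputable def pactW (δ : Q → A → Option (A × Q)) : List Q → (ℕ → A) → Option (ℕ → A)
  | [], ξ => some ξ
  | q :: w, ξ => (pactW δ w ξ).bind (pact δ q)

/-- The orbit `Q* ∘ ξ` of an infinite word. -/
def orbitP (δ : Q → A → Option (A × Q)) (ξ : ℕ → A) : Set (ℕ → A) :=
  {η | ∃ w : List Q, pactW δ w ξ = some η}

/-- The semigroup generated by the automaton: all partial maps on infinite words induced by
nonempty state sequences. -/
def sgpP (δ : Q → A → Option (A × Q)) : Set ((ℕ → A) → Option (ℕ → A)) :=
  {F | ∃ w : List Q, w ≠ [] ∧ F = pactW δ w}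

variable [DecidableEq C]

/-- The (at most one, by SW-determinism) tile of `W` with west color `q` and south color `a`. -/
noncomputable def stepTile (W : Finset (WangTile C)) (q a : C) : Option (WangTile C) :=
  (W.filter fun t => t.west = q ∧ t.south = a).toList.head?

/-- The transition function of the automaton `T(W)` associated to an SW-deterministic tile
set: states and letters are colors; on state `q` (west) and input `a` (south) it outputs the
north color and moves to the east color of the unique matching tile. -/
noncomputable def deltaW (W : Finset (WangTile C)) : C → C → Option (C × C) :=
  fun q a => (stepTile W q a).map fun t => (t.north, t.east)

/-- `W` is SW-deterministic. -/
def SWDet (W : Finset (WangTile C)) : Prop :=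
  ∀ t ∈ W, ∀ t' ∈ W, t.south = t'.south → t.west = t'.west → t = t'

/-- `W` admits a valid tiling of the square `[0,ℓ] × [0,ℓ]`. -/
def TilesSquare (W : Finset (WangTile C)) (l : ℕ) : Prop :=
  ∃ f : ℤ × ℤ → WangTile C,
    (∀ x y : ℤ, 0 ≤ x → x ≤ l → 0 ≤ y → y ≤ l → f (x, y) ∈ W) ∧
    (∀ x y : ℤ, 0 ≤ x → x + 1 ≤ l → 0 ≤ y → y ≤ l → (f (x, y)).east = (f (x + 1, y)).west) ∧
    (∀ x y : ℤ, 0 ≤ x → x ≤ l → 0 ≤ y → y + 1 ≤ l → (f (x, y)).north = (f (x, y + 1)).south)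


/-! A word `q_m ⋯ q_1` of states defined on some `ξ` gives a path
`ξ = ρ 0 → ρ 1 → ⋯ → ρ m` in the orbital graph; the run of `q_{i+1}` on `ρ i` is a row of
tiles with south word `ρ i` and north word `ρ (i + 1)`, and stacking `ℓ + 1` such rows tiles
`[0,ℓ]²`. If no word of length `> ℓ` were defined anywhere, every element of the semigroup
would be the empty map or given by a short word over the finitely many live states (west
colours of tiles), so the semigroup would be finite. The `ℤ²`-tiling follows from the
squares by compactness. -/

section Automaton

variable {δ : Q → A → Option (A × Q)}

theorem exists_run_of_pact_eq_some {q : Q} {ξ η : ℕ → A} (h : pact δ q ξ = some η) :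
    ∃ r : ℕ → Q, r 0 = q ∧ ∀ n, δ (r n) (ξ n) = some (η n, r (n + 1)) := by
  rw [pact] at h
  split_ifs at h with hall
  obtain rfl := Option.some.inj h
  have hstep : ∀ n, ∃ s, pstate δ ξ q n = some s ∧
      ∃ s', δ s (ξ n) = some ((pout δ ξ q n).get (hall n), s') := by
    intro n
    obtain ⟨b, hb⟩ := Option.isSome_iff_exists.mp (hall n)
    obtain ⟨s, hs, hout⟩ := Option.bind_eq_some_iff.mp hb
    obtain ⟨⟨b', s'⟩, hδ, rfl⟩ := Option.map_eq_some_iff.mp hout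
    exact ⟨s, hs, s', by simp [hb, hδ]⟩
  choose r hr s' hs' using hstep
  have hnext : ∀ n, s' n = r (n + 1) := fun n => by
    simpa [pstate, hr n, hs' n] using hr (n + 1)
  exact ⟨r, by simpa [pstate] using (hr 0).symm, fun n => hnext n ▸ hs' n⟩

theorem pact_eq_none_of_forall_eq_none {q : Q} (h : ∀ a, δ q a = none) (ξ : ℕ → A) :
    pact δ q ξ = none := by
  rw [pact, dif_neg]
  intro hall
  simpa [pout, pstate, h] using hall 0

theorem pactW_eq_none_of_mem {q : Q} {w : List Q} (hq : q ∈ w) (h : ∀ a, δ q a = none)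
    (ξ : ℕ → A) : pactW δ w ξ = none := by
  induction w with
  | nil => simp at hq
  | cons p w ih =>
    rw [pactW]
    rcases List.mem_cons.mp hq with rfl | hq
    · cases pactW δ w ξ <;> simp [pact_eq_none_of_forall_eq_none h]
    · rw [ih hq, Option.bind_none]

theorem exists_chain_of_pactW_eq_some {w : List Q} {ξ η : ℕ → A} (h : pactW δ w ξ = some η) :
    ∃ ρ : ℕ → ℕ → A, ρ 0 = ξ ∧ ρ w.length = η ∧
      ∀ i < w.length, ∃ q, pact δ q (ρ i) = some (ρ (i + 1)) := by
  induction w generalizing η with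
  | nil => exact ⟨fun _ => ξ, rfl, Option.some.inj h, by simp⟩
  | cons q w ih =>
    obtain ⟨μ, hμ, hq⟩ := Option.bind_eq_some_iff.mp h
    obtain ⟨ρ, hρ0, hρμ, hρ⟩ := ih hμ
    refine ⟨Function.update ρ (w.length + 1) η, by simp [hρ0], by simp, fun i hi => ?_⟩
    rcases Nat.lt_succ_iff_lt_or_eq.mp hi with hi | rfl
    · simpa [Function.update_of_ne (show i ≠ w.length + 1 by omega),
        Function.update_of_ne (show i + 1 ≠ w.length + 1 by omega)] using hρ i hi
    · exact ⟨q, by simpa [hρμ] using hq⟩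

theorem List.finite_setOf_length_lt_forall_mem {α : Type*} {s : Set α} (hs : s.Finite)
    (L : ℕ) : {w : List α | w.length < L ∧ ∀ a ∈ w, a ∈ s}.Finite := by
  have := hs.to_subtype
  refine ((List.finite_length_lt s L).image (List.map Subtype.val)).subset ?_
  rintro w ⟨hlen, hw⟩
  exact ⟨w.pmap Subtype.mk hw, by simpa using hlen, by simp [List.map_pmap]⟩

theorem sgpP_finite_of_forall_pactW_eq_none {s : Set Q} (hs : s.Finite)
    (hdead : ∀ q ∉ s, ∀ a, δ q a = none) {L : ℕ}
    (hlong : ∀ w : List Q, L ≤ w.length → ∀ ξ, pactW δ w ξ = none) : (sgpP δ).Finite := by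
  refine (((List.finite_setOf_length_lt_forall_mem hs L).image (pactW δ)).insert
    fun _ => none).subset ?_
  rintro _ ⟨w, -, rfl⟩
  by_cases hlen : L ≤ w.length
  · exact Or.inl (funext (hlong w hlen))
  by_cases hw : ∀ q ∈ w, q ∈ s
  · exact Or.inr ⟨w, ⟨not_le.mp hlen, hw⟩, rfl⟩
  push Not at hw
  obtain ⟨q, hqw, hqs⟩ := hw
  exact Or.inl (funext (pactW_eq_none_of_mem hqw (hdead q hqs)))

end Automaton

section Tiles

variable {W : Finset (WangTile C)}

theorem exists_tile_of_deltaW_eq_some {q a b q' : C} (h : deltaW W q a = some (b, q')) :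
    ∃ t ∈ W, t.west = q ∧ t.south = a ∧ t.north = b ∧ t.east = q' := by
  obtain ⟨t, ht, htb⟩ := Option.map_eq_some_iff.mp h
  have hmem : t ∈ (W.filter fun t => t.west = q ∧ t.south = a).toList :=
    List.mem_of_mem_head? ht
  simp only [Finset.mem_toList, Finset.mem_filter] at hmem
  obtain ⟨rfl, rfl⟩ := Prod.mk.inj htb
  exact ⟨t, hmem.1, hmem.2.1, hmem.2.2, rfl, rfl⟩

theorem deltaW_eq_none_of_notMem {q : C} (hq : q ∉ W.image WangTile.west) (a : C) :
    deltaW W q a = none := by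
  refine Option.eq_none_iff_forall_ne_some.mpr fun ⟨b, q'⟩ h => hq ?_
  obtain ⟨t, ht, rfl, -⟩ := exists_tile_of_deltaW_eq_some h
  exact Finset.mem_image_of_mem _ ht

structure IsTileRow (W : Finset (WangTile C)) (ξ η : ℕ → C) (T : ℕ → WangTile C) : Prop where
  mem : ∀ n, T n ∈ W
  south : ∀ n, (T n).south = ξ n
  north : ∀ n, (T n).north = η n
  east_west : ∀ n, (T n).east = (T (n + 1)).west

theorem exists_isTileRow_of_pact_eq_some {q : C} {ξ η : ℕ → C}
    (h : pact (deltaW W) q ξ = some η) : ∃ T, IsTileRow W ξ η T := by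
  obtain ⟨r, -, hr⟩ := exists_run_of_pact_eq_some h
  choose T hT hwest hsouth hnorth heast using fun n => exists_tile_of_deltaW_eq_some (hr n)
  exact ⟨T, hT, hsouth, hnorth, fun n => (heast n).trans (hwest (n + 1)).symm⟩

omit [DecidableEq C] in
theorem tilesSquare_of_isTileRow {l : ℕ} {ρ : ℕ → ℕ → C} {R : ℕ → ℕ → WangTile C}
    (hR : ∀ i ≤ l, IsTileRow W (ρ i) (ρ (i + 1)) (R i)) : TilesSquare W l := by
  refine ⟨fun p => R p.2.toNat p.1.toNat, fun x y _ _ _ hy => (hR _ (by omega)).mem _,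
    fun x y hx _ _ hy => ?_, fun x y _ _ hy hy' => ?_⟩
  · simpa [show (x + 1).toNat = x.toNat + 1 by omega] using (hR _ (by omega)).east_west _
  · simp only [show (y + 1).toNat = y.toNat + 1 by omega]
    rw [(hR _ (by omega)).north, (hR _ (by omega)).south]

theorem tilesSquare_of_sgpP_infinite (hinf : (sgpP (deltaW W)).Infinite) (l : ℕ) :
    TilesSquare W l := by
  obtain ⟨w, hlen, ξ, hw⟩ :
      ∃ w : List C, l + 1 ≤ w.length ∧ ∃ ξ, pactW (deltaW W) w ξ ≠ none := by
    by_contra! h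
    exact hinf (sgpP_finite_of_forall_pactW_eq_none (W.image WangTile.west).finite_toSet
      (fun q hq => deltaW_eq_none_of_notMem hq) h)
  obtain ⟨η, hη⟩ := Option.ne_none_iff_exists'.mp hw
  obtain ⟨ρ, -, -, hρ⟩ := exists_chain_of_pactW_eq_some hη
  have hrows : ∀ i, ∃ T, i < w.length → IsTileRow W (ρ i) (ρ (i + 1)) T := by
    intro i
    by_cases hi : i < w.length
    · obtain ⟨T, hT⟩ := exists_isTileRow_of_pact_eq_some (hρ i hi).choose_spec
      exact ⟨T, fun _ => hT⟩
    · exact ⟨fun _ => ⟨ξ 0, ξ 0, ξ 0, ξ 0⟩, fun h => absurd h hi⟩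
  choose R hR using hrows
  exact tilesSquare_of_isTileRow fun i hi => hR i (by omega)

end Tiles

section Compactness

variable {W : Finset (WangTile C)}

def IsTilingOn (W : Finset (WangTile C)) (S : Set (ℤ × ℤ)) (f : ℤ × ℤ → WangTile C) : Prop :=
  ∀ x y, (x, y) ∈ S → f (x, y) ∈ W ∧
    ((x + 1, y) ∈ S → (f (x, y)).east = (f (x + 1, y)).west) ∧
    ((x, y + 1) ∈ S → (f (x, y)).north = (f (x, y + 1)).south)

def centeredBox (n : ℕ) : Set (ℤ × ℤ) :=
  Set.Icc (-n : ℤ) n ×ˢ Set.Icc (-n : ℤ) n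

theorem eventually_mem_centeredBox (p : ℤ × ℤ) :
    ∀ᶠ n : ℕ in Filter.atTop, p ∈ centeredBox n := by
  filter_upwards [Filter.eventually_ge_atTop (p.1.natAbs + p.2.natAbs)] with n hn
  simp only [centeredBox, Set.mem_prod, Set.mem_Icc]
  omega

omit [DecidableEq C] in
theorem exists_isTilingOn_centeredBox {n : ℕ} (h : TilesSquare W (2 * n)) :
    ∃ g, IsTilingOn W (centeredBox n) g := by
  obtain ⟨f, hmem, heast, hnorth⟩ := h
  refine ⟨fun p => f (p.1 + n, p.2 + n), fun x y hxy => ?_⟩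
  simp only [centeredBox, Set.mem_prod, Set.mem_Icc] at hxy ⊢
  refine ⟨hmem _ _ (by omega) (by push_cast; omega) (by omega) (by push_cast; omega),
    fun hx => ?_, fun hy => ?_⟩
  · rw [show x + 1 + (n : ℤ) = x + n + 1 by ring]
    exact heast _ _ (by omega) (by push_cast; omega) (by omega) (by push_cast; omega)
  · rw [show y + 1 + (n : ℤ) = y + n + 1 by ring]
    exact hnorth _ _ (by omega) (by push_cast; omega) (by omega) (by push_cast; omega)

omit [DecidableEq C] in
theorem exists_isZTiling_of_isTilingOn_centeredBox
    (h : ∀ n : ℕ, ∃ g, IsTilingOn W (centeredBox n) g) : ∃ f, IsZTiling W f := by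
  choose g hg using h
  obtain ⟨U, hU⟩ := Ultrafilter.exists_le (Filter.atTop : Filter ℕ)
  have hbox : ∀ p, ∀ᶠ n in U, p ∈ centeredBox n :=
    fun p => hU (eventually_mem_centeredBox p)
  have hlim : ∀ p, ∃ t, ∀ᶠ n in U, g n p = t := by
    intro p
    have hW : ∀ᶠ n in U, g n p ∈ W :=
      (hbox p).mono fun n hn => (hg n p.1 p.2 hn).1
    obtain ⟨t, -, ht⟩ := (U.map fun n => g n p).eq_pure_of_finite_mem W.finite_toSet hW
    exact ⟨t, show {t} ∈ U.map fun n => g n p from ht ▸ rfl⟩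
  choose f hf using hlim
  refine ⟨f, fun x y => ?_⟩
  obtain ⟨n, h0, h1, h2, hxy, hx, hy⟩ := ((hf (x, y)).and <| (hf (x + 1, y)).and <|
    (hf (x, y + 1)).and <| (hbox (x, y)).and <| (hbox (x + 1, y)).and (hbox (x, y + 1))).exists
  obtain ⟨hmem, heast, hnorth⟩ := hg n x y hxy
  exact ⟨h0 ▸ hmem, h0 ▸ h1 ▸ heast hx, h0 ▸ h2 ▸ hnorth hy⟩

end Compactness

theorem stmt14_general (W : Finset (WangTile C))
    (hinf : (sgpP (deltaW W)).Infinite) :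
    (∀ l : ℕ, TilesSquare W l) ∧ ∃ f : ℤ × ℤ → WangTile C, IsZTiling W f := by
  have hsq : ∀ l : ℕ, TilesSquare W l := tilesSquare_of_sgpP_infinite hinf
  exact ⟨hsq, exists_isZTiling_of_isTilingOn_centeredBox fun n =>
    exists_isTilingOn_centeredBox (hsq (2 * n))⟩

/-- If `W` is SW-deterministic and the semigroup generated by the associated automaton
`T(W)` is infinite, then `W` tiles every square `[0,ℓ] × [0,ℓ]`, and hence admits a
`ℤ²`-tiling. -/
theorem stmt14 (W : Finset (WangTile C)) (hsw : SWDet W)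
    (hinf : (sgpP (deltaW W)).Infinite) :
    (∀ l : ℕ, TilesSquare W l) ∧ ∃ f : ℤ × ℤ → WangTile C, IsZTiling W f :=
  stmt14_general W hinf
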